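/- Let D_P, D_Q, D_R be finite sets of variables with D_R ∩ D_P ⊆ D_Q, and let Ω_P, Ω_Q, Ω_R be sets of mappings such that every mapping in Ω_P has domain D_P, every mapping in Ω_Q has domain D_Q, and every mapping in Ω_R has domain D_R. Then Ω_P ⋈ (Ω_Q ⟕ Ω_R) = (Ω_P ⋈ Ω_Q) ⟕ Ω_R. -/
import Mathlib


/- Fix infinite disjoint sets `V` of variables and `U` of constants.
A mapping is a partial function from variables to constants, represented as
`V → Option U`; its domain is the set of variables on which it is defined. -/

variable {V U : Type*}

/-- A (partial) mapping from variables to constants. -/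
abbrev Mapping (V U : Type*) := V → Option U

/-- The domain of a mapping. -/
def mdom (μ : Mapping V U) : Set V := {x | (μ x).isSome}

/-- Two mappings are compatible if they agree on the intersection of their domains. -/
def Compatible (μ₁ μ₂ : Mapping V U) : Prop :=
  ∀ x ∈ mdom μ₁ ∩ mdom μ₂, μ₁ x = μ₂ x

/-- The union of two mappings (left-biased; for compatible mappings this is
the usual union). -/
def munion (μ₁ μ₂ : Mapping V U) : Mapping V U :=
  fun x => (μ₁ x).orElse (fun _ => μ₂ x)

/-- Join of two sets of mappings:
`Ω₁ ⋈ Ω₂ = {μ₁ ∪ μ₂ | μ₁ ∈ Ω₁, μ₂ ∈ Ω₂, μ₁ ∼ μ₂}`. -/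
def Join (Ω₁ Ω₂ : Set (Mapping V U)) : Set (Mapping V U) :=
  {μ | ∃ μ₁ ∈ Ω₁, ∃ μ₂ ∈ Ω₂, Compatible μ₁ μ₂ ∧ μ = munion μ₁ μ₂}

/-- Difference of two sets of mappings:
`Ω₁ ∖ Ω₂ = {μ₁ ∈ Ω₁ | no μ₂ ∈ Ω₂ is compatible with μ₁}`. -/
def MDiff (Ω₁ Ω₂ : Set (Mapping V U)) : Set (Mapping V U) :=
  {μ₁ ∈ Ω₁ | ¬ ∃ μ₂ ∈ Ω₂, Compatible μ₁ μ₂}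

/-- Left outer join: `Ω₁ ⟕ Ω₂ = (Ω₁ ⋈ Ω₂) ∪ (Ω₁ ∖ Ω₂)`. -/
def LeftJoin (Ω₁ Ω₂ : Set (Mapping V U)) : Set (Mapping V U) :=
  Join Ω₁ Ω₂ ∪ MDiff Ω₁ Ω₂

lemma munion_assoc (a b c : Mapping V U) :
    munion (munion a b) c = munion a (munion b c) := by
  funext x; cases h : a x <;> simp [munion, h]

lemma mdom_munion (a b : Mapping V U) : mdom (munion a b) = mdom a ∪ mdom b := by
  ext x; cases h : a x <;> simp [mdom, munion, h, Set.mem_union]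

lemma munion_eq_left {a : Mapping V U} (b : Mapping V U) {x : V}
    (hx : (a x).isSome) : munion a b x = a x := by
  cases h : a x with
  | none => simp [h] at hx
  | some v => simp [munion, h]

lemma munion_eq_right {a b : Mapping V U} (hab : Compatible a b) {x : V}
    (hx : (b x).isSome) : munion a b x = b x := by
  cases h : a x with
  | none => simp [munion, h]
  | some v => simpa [munion, h] using hab x ⟨by simp [mdom, h], hx⟩

/-- if `D_R ∩ D_P ⊆ D_Q` and the mappings in `Ω_P`, `Ω_Q`, `Ω_R`
have domains `D_P`, `D_Q`, `D_R` respectively, then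
`Ω_P ⋈ (Ω_Q ⟕ Ω_R) = (Ω_P ⋈ Ω_Q) ⟕ Ω_R`. -/
theorem join_leftJoin_exchange [Infinite V] [Infinite U]
    (DP DQ DR : Finset V) (hD : (DR : Set V) ∩ (DP : Set V) ⊆ (DQ : Set V))
    (ΩP ΩQ ΩR : Set (Mapping V U))
    (hP : ∀ μ ∈ ΩP, mdom μ = (DP : Set V))
    (hQ : ∀ μ ∈ ΩQ, mdom μ = (DQ : Set V))
    (hR : ∀ μ ∈ ΩR, mdom μ = (DR : Set V)) :
    Join ΩP (LeftJoin ΩQ ΩR) = LeftJoin (Join ΩP ΩQ) ΩR := by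
  ext μ
  constructor
  · rintro ⟨μP, hμP, ν, hν, hc, rfl⟩
    rcases hν with ⟨μQ, hμQ, μR, hμR, hQR, rfl⟩ | ⟨hμQ, hnR⟩
    · have hdP := hP μP hμP; have hdQ := hQ μQ hμQ; have hdR := hR μR hμR
      have hPQ : Compatible μP μQ := by
        rintro x ⟨hx1, hx2⟩
        have := hc x ⟨hx1, by rw [mdom_munion]; exact Or.inl hx2⟩
        rwa [munion_eq_left μR hx2] at this
      have hPQR : Compatible (munion μP μQ) μR := by
        rintro x ⟨hx1, hx2⟩
        rw [mdom_munion] at hx1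
        have hxQ : x ∈ mdom μQ := by
          rcases hx1 with h | h
          · rw [hdQ]; exact hD ⟨hdR ▸ hx2, hdP ▸ h⟩
          · exact h
        rw [munion_eq_right hPQ hxQ]
        exact hQR x ⟨hxQ, hx2⟩
      exact Or.inl ⟨munion μP μQ, ⟨μP, hμP, μQ, hμQ, hPQ, rfl⟩, μR, hμR, hPQR,
        (munion_assoc _ _ _).symm⟩
    · refine Or.inr ⟨⟨μP, hμP, _, hμQ, hc, rfl⟩, ?_⟩
      rintro ⟨μR, hμR, hcR⟩
      apply hnR
      refine ⟨μR, hμR, ?_⟩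
      rintro x ⟨hx1, hx2⟩
      have := hcR x ⟨by rw [mdom_munion]; exact Or.inr hx1, hx2⟩
      rwa [munion_eq_right hc hx1] at this
  · rintro (⟨ν, ⟨μP, hμP, μQ, hμQ, hPQ, rfl⟩, μR, hμR, hcR, rfl⟩ |
      ⟨⟨μP, hμP, μQ, hμQ, hPQ, rfl⟩, hnR⟩)
    · have hdP := hP μP hμP; have hdQ := hQ μQ hμQ; have hdR := hR μR hμR
      have hQR : Compatible μQ μR := by
        rintro x ⟨hx1, hx2⟩
        have := hcR x ⟨by rw [mdom_munion]; exact Or.inr hx1, hx2⟩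
        rwa [munion_eq_right hPQ hx1] at this
      have hPc : Compatible μP (munion μQ μR) := by
        rintro x ⟨hx1, hx2⟩
        rw [mdom_munion] at hx2
        have hxQ : x ∈ mdom μQ := by
          rcases hx2 with h | h
          · exact h
          · rw [hdQ]; exact hD ⟨hdR ▸ h, hdP ▸ hx1⟩
        rw [munion_eq_left μR hxQ]
        exact hPQ x ⟨hx1, hxQ⟩
      exact ⟨μP, hμP, munion μQ μR, Or.inl ⟨μQ, hμQ, μR, hμR, hQR, rfl⟩, hPc,
        munion_assoc _ _ _⟩
    · have hdP := hP μP hμP; have hdQ := hQ μQ hμQ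
      have hQdiff : μQ ∈ MDiff ΩQ ΩR := by
        refine ⟨hμQ, ?_⟩
        rintro ⟨μR, hμR, hQR⟩
        have hdR := hR μR hμR
        apply hnR
        refine ⟨μR, hμR, ?_⟩
        rintro x ⟨hx1, hx2⟩
        rw [mdom_munion] at hx1
        have hxQ : x ∈ mdom μQ := by
          rcases hx1 with h | h
          · rw [hdQ]; exact hD ⟨hdR ▸ hx2, hdP ▸ h⟩
          · exact h
        rw [munion_eq_right hPQ hxQ]
        exact hQR x ⟨hxQ, hx2⟩
      exact ⟨μP, hμP, μQ, Or.inr hQdiff, hPQ, rfl⟩
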